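/- Assume s' = −s. Then 𝔸 = −(s/2)·I_n, and the map α : 𝔥 → 𝔤 is an injective homomorphism of real Lie algebras, i.e. α([X,Y]) = [α(X), α(Y)] for all X, Y ∈ 𝔥. (Algebraic form of the statement that (S^p × S^q, (sḡ₁, −sḡ₂)) is conformally flat: the curvature κ of the normal Cartan connection vanishes identically.) -/

import Mathlib

open Matrix

noncomputable section

/-- The sign `sgn(s')` of a (nonzero) real number. -/
def sgn (s' : ℝ) : ℝ := if 0 < s' then 1 else -1

/-- Index type of `ℝⁿ`, `n = p + q`. -/
abbrev NIdx (p q : ℕ) := Fin p ⊕ Fin q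

/-- Index type for block matrices of block sizes `1, n, 1` with `n = p + q`. -/
abbrev BigIdx (p q : ℕ) := (Fin 1 ⊕ (Fin p ⊕ Fin q)) ⊕ Fin 1

/-- Elements of `𝔥 = so(p+1) × so(q+1)`, written as pairs of `(1+p)`- and
`(1+q)`-indexed matrices. -/
abbrev HElt (p q : ℕ) :=
  Matrix (Fin 1 ⊕ Fin p) (Fin 1 ⊕ Fin p) ℝ × Matrix (Fin 1 ⊕ Fin q) (Fin 1 ⊕ Fin q) ℝ

/-- Membership in `𝔥 = so(p+1) × so(q+1)`: both components are skew-symmetric. -/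
def skewPair (p q : ℕ) (X : HElt p q) : Prop := X.1ᵀ = -X.1 ∧ X.2ᵀ = -X.2

/-- The componentwise commutator bracket of `𝔥 = so(p+1) × so(q+1)`. -/
def hBracket (p q : ℕ) (X Y : HElt p q) : HElt p q :=
  (X.1 * Y.1 - Y.1 * X.1, X.2 * Y.2 - Y.2 * X.2)

/-- `𝐠 = diag(I_p, ε I_q)`, `ε = sgn s'`. -/
def gMat (p q : ℕ) (s' : ℝ) : Matrix (NIdx p q) (NIdx p q) ℝ :=
  fromBlocks 1 0 0 (sgn s' • 1)

/-- `J = [[0,0,1],[0,𝐠,0],[1,0,0]]` (block sizes `1, n, 1`), so that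
`𝔤 = so(J) = {M : MᵗJ + JM = 0}`. -/
def JMat (p q : ℕ) (s' : ℝ) : Matrix (BigIdx p q) (BigIdx p q) ℝ :=
  fromBlocks
    (fromBlocks 0 0 0 (gMat p q s'))
    (Matrix.of fun i _ => Sum.elim (fun _ => (1 : ℝ)) (fun _ => 0) i)
    (Matrix.of fun _ j => Sum.elim (fun _ => (1 : ℝ)) (fun _ => 0) j)
    0

/-- The rho-tensor
`𝔸 = −(1/(2δ))((2sΔ+m)·diag(I_p,0) + (2s'Δ−m)·ε·diag(0,I_q))`, where
`δ = (n−1)(n−2)`, `Δ = (p−1)(q−1)`, `m = s·p(p−1) − s'·q(q−1)`, `ε = sgn s'`. -/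
def AMat (p q : ℕ) (s s' : ℝ) : Matrix (NIdx p q) (NIdx p q) ℝ :=
  (-(1 / (2 * (((p : ℝ) + (q : ℝ) - 1) * ((p : ℝ) + (q : ℝ) - 2))))) •
    ((2 * s * (((p : ℝ) - 1) * ((q : ℝ) - 1)) +
        (s * p * ((p : ℝ) - 1) - s' * q * ((q : ℝ) - 1))) •
      (fromBlocks 1 0 0 0 : Matrix (NIdx p q) (NIdx p q) ℝ) +
     ((2 * s' * (((p : ℝ) - 1) * ((q : ℝ) - 1)) -
        (s * p * ((p : ℝ) - 1) - s' * q * ((q : ℝ) - 1))) * sgn s') •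
      (fromBlocks 0 0 0 1 : Matrix (NIdx p q) (NIdx p q) ℝ))

/-- The `ℝᵐ`-component `v` of an element `[[0,−vᵗ],[v,A]]` of `so(m+1)`. -/
def vPart {m : ℕ} (P : Matrix (Fin 1 ⊕ Fin m) (Fin 1 ⊕ Fin m) ℝ) : Fin m → ℝ :=
  fun i => P (Sum.inr i) (Sum.inl 0)

/-- `x := (v/√s, w/√|s'|) ∈ ℝⁿ` for `X = (v ⊕ A₁, w ⊕ A₂) ∈ 𝔥`. -/
def xVec (p q : ℕ) (s s' : ℝ) (X : HElt p q) : NIdx p q → ℝ :=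
  Sum.elim (fun i => vPart X.1 i / Real.sqrt s) (fun j => vPart X.2 j / Real.sqrt |s'|)

/-- The invariant Cartan connection `α : 𝔥 → 𝔤`: for `X = (v ⊕ A₁, w ⊕ A₂)` and
`x = (v/√s, w/√|s'|)`, `α(X)` is the block matrix (block sizes `1, n, 1`) with
`(1,2)`-block `xᵗ𝔸`, `(2,1)`-block `x`, `(2,2)`-block `diag(A₁,A₂)`,
`(2,3)`-block `−𝐠𝔸x`, `(3,2)`-block `−xᵗ𝐠`, and all other blocks zero. -/
def alphaMap (p q : ℕ) (s s' : ℝ) (X : HElt p q) :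
    Matrix (BigIdx p q) (BigIdx p q) ℝ :=
  fromBlocks
    (fromBlocks 0
      (Matrix.of fun _ j => Matrix.vecMul (xVec p q s s' X) (AMat p q s s') j)
      (Matrix.of fun i _ => xVec p q s s' X i)
      (fromBlocks (toBlocks₂₂ X.1) 0 0 (toBlocks₂₂ X.2)))
    (Matrix.of fun i _ => Sum.elim (fun _ => (0 : ℝ))
      (fun k => -(Matrix.mulVec (gMat p q s' * AMat p q s s') (xVec p q s s' X) k)) i)
    (Matrix.of fun _ j => Sum.elim (fun _ => (0 : ℝ))
      (fun k => -(Matrix.vecMul (xVec p q s s' X) (gMat p q s') k)) j)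
    0

/-- The curvature `κ(X,Y) = [α(X),α(Y)] − α([X,Y])` of the Cartan connection `α`. -/
def kappaMap (p q : ℕ) (s s' : ℝ) (X Y : HElt p q) :
    Matrix (BigIdx p q) (BigIdx p q) ℝ :=
  alphaMap p q s s' X * alphaMap p q s s' Y - alphaMap p q s s' Y * alphaMap p q s s' X -
    alphaMap p q s s' (hBracket p q X Y)

/-!
For `s' = -s` the rho-tensor is the scalar `𝔸 = -(s/2)·Iₙ`, and `α` becomes conjugate to the
block-diagonal inclusion `so(p+1) × so(q+1) ⊂ so(p+1, q+1)`. In `ℝ^{p+1} ⊕ ℝ^{q+1}` with basis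
`e₀, eᵢ, f₀, fⱼ` the map `e₀ ↦ (√s/2)E₊ + (1/√s)E₋`, `f₀ ↦ (√s/2)E₊ - (1/√s)E₋`, `eᵢ ↦ Eᵢ`,
`fⱼ ↦ Fⱼ` onto the basis `E₊, Eᵢ, Fⱼ, E₋` of `J` intertwines `X ↦ diag(X₁, X₂)` with `α`.
Conjugation by an invertible change of basis and the block-diagonal inclusion are injective Lie
algebra homomorphisms, hence so is `α`.
-/

section Conjugation

variable {l m R : Type*} [Fintype l] [Fintype m] [DecidableEq m] [Ring R]
  {P : Matrix l m R} {Q : Matrix m l R}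

lemma conj_mul_conj_of_mul_eq_one (hQP : Q * P = 1) (A B : Matrix m m R) :
    P * A * Q * (P * B * Q) = P * (A * B) * Q := by
  simp only [Matrix.mul_assoc]
  rw [← Matrix.mul_assoc Q P, hQP, Matrix.one_mul]

lemma conj_commutator_of_mul_eq_one (hQP : Q * P = 1) (A B : Matrix m m R) :
    P * (A * B - B * A) * Q = P * A * Q * (P * B * Q) - P * B * Q * (P * A * Q) := by
  rw [conj_mul_conj_of_mul_eq_one hQP, conj_mul_conj_of_mul_eq_one hQP, Matrix.mul_sub,
    Matrix.sub_mul]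

lemma conj_injective_of_mul_eq_one (hQP : Q * P = 1) :
    Function.Injective fun A : Matrix m m R => P * A * Q := by
  intro A B h
  have := congrArg (fun M => Q * M * P) h
  simpa only [Matrix.mul_assoc, ← Matrix.mul_assoc Q P, hQP, Matrix.one_mul, Matrix.mul_one]
    using this

end Conjugation

lemma sgn_neg_of_pos {s : ℝ} (hs : 0 < s) : sgn (-s) = -1 :=
  if_neg (by linarith)

lemma gMat_neg_of_pos (p q : ℕ) {s : ℝ} (hs : 0 < s) :
    gMat p q (-s) = fromBlocks 1 0 0 (-1) := by
  rw [gMat, sgn_neg_of_pos hs, neg_one_smul]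

lemma AMat_neg (p q : ℕ) (hn : 3 ≤ p + q) {s : ℝ} (hs : 0 < s) :
    AMat p q s (-s) = (-(s / 2)) • (1 : Matrix (NIdx p q) (NIdx p q) ℝ) := by
  set δ : ℝ := ((p : ℝ) + q - 1) * ((p : ℝ) + q - 2) with hδ_def
  have hδ : δ ≠ 0 := by
    have : (3 : ℝ) ≤ p + q := by exact_mod_cast hn
    nlinarith
  have hcoef₁ : 2 * s * (((p : ℝ) - 1) * ((q : ℝ) - 1)) +
      (s * p * ((p : ℝ) - 1) - (-s) * q * ((q : ℝ) - 1)) = s * δ := by ring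
  have hcoef₂ : (2 * (-s) * (((p : ℝ) - 1) * ((q : ℝ) - 1)) -
      (s * p * ((p : ℝ) - 1) - (-s) * q * ((q : ℝ) - 1))) * -1 = s * δ := by ring
  rw [AMat, sgn_neg_of_pos hs, hcoef₁, hcoef₂, ← smul_add, fromBlocks_add, add_zero, zero_add,
    add_zero, zero_add, fromBlocks_one, smul_smul, ← hδ_def]
  congr 1
  field_simp

lemma apply_inl_inl_of_transpose_eq_neg {m : ℕ} {P : Matrix (Fin 1 ⊕ Fin m) (Fin 1 ⊕ Fin m) ℝ}
    (hP : Pᵀ = -P) (a : Fin 1) : P (.inl a) (.inl a) = 0 := by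
  have := congrFun (congrFun hP (.inl a)) (.inl a)
  simp only [transpose_apply, Matrix.neg_apply] at this
  linarith

lemma apply_inl_inr_of_transpose_eq_neg {m : ℕ} {P : Matrix (Fin 1 ⊕ Fin m) (Fin 1 ⊕ Fin m) ℝ}
    (hP : Pᵀ = -P) (a : Fin 1) (i : Fin m) : P (.inl a) (.inr i) = -vPart P i := by
  rw [vPart, Fin.fin_one_eq_zero a, ← neg_apply, ← hP, transpose_apply]

abbrev SplitIdx (p q : ℕ) := (Fin 1 ⊕ Fin p) ⊕ (Fin 1 ⊕ Fin q)

def hInclusion (p q : ℕ) (X : HElt p q) : Matrix (SplitIdx p q) (SplitIdx p q) ℝ :=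
  fromBlocks X.1 0 0 X.2

lemma hInclusion_injective (p q : ℕ) : Function.Injective (hInclusion p q) := by
  intro X Y h
  obtain ⟨h₁, -, -, h₂⟩ := fromBlocks_inj.1 h
  exact Prod.ext h₁ h₂

lemma hInclusion_hBracket (p q : ℕ) (X Y : HElt p q) :
    hInclusion p q (hBracket p q X Y) =
      hInclusion p q X * hInclusion p q Y - hInclusion p q Y * hInclusion p q X := by
  simp [hInclusion, hBracket, fromBlocks_multiply, sub_eq_add_neg, fromBlocks_neg, fromBlocks_add]

lemma skewPair_hBracket {p q : ℕ} {X Y : HElt p q} (hX : skewPair p q X) (hY : skewPair p q Y) :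
    skewPair p q (hBracket p q X Y) := by
  constructor <;> simp [hBracket, transpose_mul, hX.1, hX.2, hY.1, hY.2]

def nullFrame (p q : ℕ) (s : ℝ) : Matrix (BigIdx p q) (SplitIdx p q) ℝ
  | .inl (.inl _), .inl (.inl _) => √s / 2
  | .inl (.inl _), .inr (.inl _) => √s / 2
  | .inr _, .inl (.inl _) => 1 / √s
  | .inr _, .inr (.inl _) => -(1 / √s)
  | .inl (.inr (.inl i)), .inl (.inr j) => (1 : Matrix (Fin p) (Fin p) ℝ) i j
  | .inl (.inr (.inr i)), .inr (.inr j) => (1 : Matrix (Fin q) (Fin q) ℝ) i j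
  | _, _ => 0

def nullFrameInv (p q : ℕ) (s : ℝ) : Matrix (SplitIdx p q) (BigIdx p q) ℝ
  | .inl (.inl _), .inl (.inl _) => 1 / √s
  | .inr (.inl _), .inl (.inl _) => 1 / √s
  | .inl (.inl _), .inr _ => √s / 2
  | .inr (.inl _), .inr _ => -(√s / 2)
  | .inl (.inr i), .inl (.inr (.inl j)) => (1 : Matrix (Fin p) (Fin p) ℝ) i j
  | .inr (.inr i), .inl (.inr (.inr j)) => (1 : Matrix (Fin q) (Fin q) ℝ) i j
  | _, _ => 0

lemma nullFrameInv_mul_nullFrame (p q : ℕ) {s : ℝ} (hs : 0 < s) :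
    nullFrameInv p q s * nullFrame p q s = 1 := by
  have : √s ≠ 0 := (Real.sqrt_pos.2 hs).ne'
  ext (((i | i) | (i | i))) (((j | j) | (j | j))) <;>
    simp [mul_apply, Fintype.sum_sum_type, nullFrame, nullFrameInv, one_apply,
      Fin.fin_one_eq_zero] <;> field_simp <;> ring

lemma nullFrame_mul_nullFrameInv (p q : ℕ) {s : ℝ} (hs : 0 < s) :
    nullFrame p q s * nullFrameInv p q s = 1 := by
  have : √s ≠ 0 := (Real.sqrt_pos.2 hs).ne'
  ext (((i | (i | i)) | i)) (((j | (j | j)) | j)) <;>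
    simp [mul_apply, Fintype.sum_sum_type, nullFrame, nullFrameInv, one_apply,
      Fin.fin_one_eq_zero] <;> field_simp <;> ring

lemma alphaMap_mul_nullFrame (p q : ℕ) (hn : 3 ≤ p + q) {s : ℝ} (hs : 0 < s) {X : HElt p q}
    (hX : skewPair p q X) :
    alphaMap p q s (-s) X * nullFrame p q s = nullFrame p q s * hInclusion p q X := by
  have : √s ≠ 0 := (Real.sqrt_pos.2 hs).ne'
  ext (((i | (i | i)) | i)) (((j | j) | (j | j))) <;>
    simp [mul_apply, Fintype.sum_sum_type, alphaMap, AMat_neg p q hn hs, gMat_neg_of_pos p q hs,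
      nullFrame, hInclusion, xVec, one_apply, Fin.fin_one_eq_zero, abs_of_pos hs,
      apply_inl_inl_of_transpose_eq_neg hX.1, apply_inl_inl_of_transpose_eq_neg hX.2,
      apply_inl_inr_of_transpose_eq_neg hX.1, apply_inl_inr_of_transpose_eq_neg hX.2,
      vecMul_neg, neg_mulVec, vecMul_smul, smul_mulVec, fromBlocks_mulVec, vecMul_fromBlocks,
      toBlocks₂₂] <;> field_simp <;> simp only [Real.sq_sqrt hs.le, vPart] <;> ring

lemma alphaMap_eq_nullFrame_conj (p q : ℕ) (hn : 3 ≤ p + q) {s : ℝ} (hs : 0 < s) {X : HElt p q}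
    (hX : skewPair p q X) :
    alphaMap p q s (-s) X = nullFrame p q s * hInclusion p q X * nullFrameInv p q s := by
  rw [← alphaMap_mul_nullFrame p q hn hs hX, Matrix.mul_assoc, nullFrame_mul_nullFrameInv p q hs,
    Matrix.mul_one]

theorem conformally_flat_of_opposite_radii (p q : ℕ)
    (hn : 3 ≤ p + q) (s : ℝ) (hs : 0 < s) :
    AMat p q s (-s) = (-(s / 2)) • (1 : Matrix (NIdx p q) (NIdx p q) ℝ) ∧
    (∀ X Y : HElt p q, skewPair p q X → skewPair p q Y →
      alphaMap p q s (-s) X = alphaMap p q s (-s) Y → X = Y) ∧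
    (∀ X Y : HElt p q, skewPair p q X → skewPair p q Y →
      alphaMap p q s (-s) (hBracket p q X Y) =
        alphaMap p q s (-s) X * alphaMap p q s (-s) Y -
          alphaMap p q s (-s) Y * alphaMap p q s (-s) X) := by
  have hframe := nullFrameInv_mul_nullFrame p q hs
  have hconj := fun X (hX : skewPair p q X) => alphaMap_eq_nullFrame_conj p q hn hs hX
  refine ⟨AMat_neg p q hn hs, fun X Y hX hY hXY => ?_, fun X Y hX hY => ?_⟩
  · rw [hconj X hX, hconj Y hY] at hXY
    exact hInclusion_injective p q (conj_injective_of_mul_eq_one hframe hXY)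
  · rw [hconj _ (skewPair_hBracket hX hY), hconj X hX, hconj Y hY, hInclusion_hBracket,
      conj_commutator_of_mul_eq_one hframe]

end
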